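/- For every k ≥ 0 and ℓ ≥ 1, the number of occurrences of the pattern [1-2^ℓ-3] in the Peano word X_{2k+1} equals C(4^{2k}+2^{2k}-1, ℓ), and the number of occurrences of the pattern [1-3^ℓ-2] in X_{2k+1} equals C(4^{2k}-2^{2k}, ℓ). -/

import Mathlib

/-- φ1: reverse the word and apply 1↦4, 2↦1, 3↦2, 4↦3. -/
def phi1 (A : List ℕ) : List ℕ := A.reverse.map (fun x => if x = 1 then 4 else x - 1)

/-- φ2: reverse the word and apply 1↦2, 2↦3, 3↦4, 4↦1. -/
def phi2 (A : List ℕ) : List ℕ := A.reverse.map (fun x => if x = 4 then 1 else x + 1)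

/-- The Peano words: `peano 1 = 123`, `peano (n+1) = φ1(Xₙ) 1 Xₙ 2 Xₙ 3 φ2(Xₙ)`. -/
def peano : ℕ → List ℕ
  | 0 => []
  | 1 => [1, 2, 3]
  | n + 2 =>
      phi1 (peano (n + 1)) ++ [1] ++ peano (n + 1) ++ [2] ++ peano (n + 1)
        ++ [3] ++ phi2 (peano (n + 1))

/-- Number of rises of a word. -/
def rises (w : List ℕ) : ℕ := ((w.zip w.tail).filter (fun p => p.1 < p.2)).length

/-- Number of descents of a word. -/
def descents (w : List ℕ) : ℕ := ((w.zip w.tail).filter (fun p => p.2 < p.1)).length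

/-- Number of occurrences of the pattern `[1-2^ℓ-3]`: sets of `ℓ` interior positions with
coinciding letters, strictly between the first and the last letter of `w`. -/
def pat123Count (w : List ℕ) (ℓ : ℕ) : ℕ :=
  (Finset.univ.filter (fun s : Finset (Fin w.length) =>
    s.card = ℓ ∧ (∀ i ∈ s, 0 < (i : ℕ) ∧ (i : ℕ) < w.length - 1) ∧
      (∀ i ∈ s, ∀ j ∈ s, w.get i = w.get j) ∧
      ∀ i ∈ s, w.headI < w.get i ∧ w.get i < w.getLastD 0)).card

/-- Number of occurrences of the pattern `[1-3^ℓ-2]`: sets of `ℓ` interior positions with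
coinciding letters, larger than the last letter, which is larger than the first letter. -/
def pat132Count (w : List ℕ) (ℓ : ℕ) : ℕ :=
  (Finset.univ.filter (fun s : Finset (Fin w.length) =>
    s.card = ℓ ∧ (∀ i ∈ s, 0 < (i : ℕ) ∧ (i : ℕ) < w.length - 1) ∧
      (∀ i ∈ s, ∀ j ∈ s, w.get i = w.get j) ∧
      ∀ i ∈ s, w.headI < w.getLastD 0 ∧ w.getLastD 0 < w.get i)).card

/-!
Since `φ1` and `φ2` reverse the word, the first letter of `X_{n+1}` comes from the last letter of
`X_n` and vice versa; hence every `X_{2k+1}` begins with `1` and ends with `3`. As all letters lie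
in `{1, 2, 3, 4}`, an occurrence of `[1-2^ℓ-3]` in `X_{2k+1}` is just an `ℓ`-set of positions of
the letter `2`, and an occurrence of `[1-3^ℓ-2]` one of the letter `4`. Because `φ1` and `φ2`
permute the letters cyclically, the numbers `|X_n|ₐ` of letters `a` in `X_n` satisfy a linear
recursion, whose solution is `|X_{n+1}|₁ = |X_{n+1}|₃ = 4^n`, `|X_{n+1}|₂ = 4^n + 2^n - 1` and
`|X_{n+1}|₄ = 4^n - 2^n`.
-/

open Finset

theorem card_filter_card_eq_and_forall_mem {α : Type*} [Fintype α] (Q : α → Prop)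
    [DecidablePred Q] (ℓ : ℕ) :
    #{s : Finset α | s.card = ℓ ∧ ∀ i ∈ s, Q i} = (#{i | Q i}).choose ℓ := by
  rw [← card_powersetCard, powersetCard_eq_filter]
  congr 1
  ext s
  simp only [mem_filter, mem_univ, mem_powerset, subset_iff, true_and]
  tauto

theorem card_filter_get_eq_count (w : List ℕ) (a : ℕ) :
    #{i : Fin w.length | w.get i = a} = w.count a := by
  induction w with
  | nil => simp
  | cons b t ih =>
    rw [card_filter] at ih ⊢
    simp only [List.length_cons, Fin.sum_univ_succ, List.count_cons, ← ih]
    by_cases hb : b = a <;> simp [hb, add_comm]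

theorem card_filter_interior_get_eq_count {w : List ℕ} {a b c : ℕ} (hb : w.head? = some b)
    (hc : w.getLast? = some c) (hab : b ≠ a) (hac : c ≠ a) :
    #{i : Fin w.length | (0 < (i : ℕ) ∧ (i : ℕ) < w.length - 1) ∧ w.get i = a} = w.count a := by
  rw [← card_filter_get_eq_count]
  congr 1
  ext i
  simp only [mem_filter, mem_univ, true_and, and_iff_right_iff_imp]
  rintro rfl
  rw [List.head?_eq_getElem?] at hb
  rw [List.getLast?_eq_getElem?] at hc
  have hfirst : (i : ℕ) ≠ 0 := by
    intro h
    rw [← h, List.getElem?_eq_getElem i.isLt] at hb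
    exact hab (Option.some_injective _ hb).symm
  have hlast : (i : ℕ) ≠ w.length - 1 := by
    intro h
    rw [← h, List.getElem?_eq_getElem i.isLt] at hc
    exact hac (Option.some_injective _ hc).symm
  omega

theorem card_pattern_eq_choose_count {w : List ℕ} {a b c : ℕ} (R : ℕ → Prop) [DecidablePred R]
    (hb : w.head? = some b) (hc : w.getLast? = some c) (hab : b ≠ a) (hac : c ≠ a)
    (hR : ∀ x ∈ w, R x ↔ x = a) (ℓ : ℕ) :
    #{s : Finset (Fin w.length) | s.card = ℓ ∧ (∀ i ∈ s, 0 < (i : ℕ) ∧ (i : ℕ) < w.length - 1) ∧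
      (∀ i ∈ s, ∀ j ∈ s, w.get i = w.get j) ∧ ∀ i ∈ s, R (w.get i)} =
      (w.count a).choose ℓ := by
  rw [← card_filter_interior_get_eq_count hb hc hab hac, ← card_filter_card_eq_and_forall_mem]
  congr 1
  ext s
  have hR' (i : Fin w.length) : R (w.get i) ↔ w.get i = a := hR _ (List.get_mem w i)
  simp only [mem_filter, mem_univ, true_and, hR']
  constructor
  · rintro ⟨hcard, hint, -, hval⟩
    exact ⟨hcard, fun i hi => ⟨hint i hi, hval i hi⟩⟩
  · rintro ⟨hcard, hs⟩
    exact ⟨hcard, fun i hi => (hs i hi).1, fun i hi j hj => (hs i hi).2.trans (hs j hj).2.symm,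
      fun i hi => (hs i hi).2⟩

theorem headI_eq_of_head?_eq_some {w : List ℕ} {b : ℕ} (hb : w.head? = some b) : w.headI = b := by
  cases w <;> simp_all

theorem getLastD_eq_of_getLast?_eq_some {w : List ℕ} {c : ℕ} (hc : w.getLast? = some c) :
    w.getLastD 0 = c := by
  rw [List.getLastD_eq_getLast?, hc, Option.getD_some]

theorem pat123Count_eq_choose_count {w : List ℕ} {b : ℕ} (hb : w.head? = some b)
    (hc : w.getLast? = some (b + 2)) (ℓ : ℕ) :
    pat123Count w ℓ = (w.count (b + 1)).choose ℓ := by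
  simp only [pat123Count, headI_eq_of_head?_eq_some hb, getLastD_eq_of_getLast?_eq_some hc]
  exact card_pattern_eq_choose_count (fun x => b < x ∧ x < b + 2) hb hc (by omega) (by omega)
    (fun x _ => by omega) ℓ

theorem pat132Count_eq_choose_count {w : List ℕ} {b c : ℕ} (hw : ∀ x ∈ w, x ≤ c + 1)
    (hb : w.head? = some b) (hc : w.getLast? = some c) (hbc : b < c) (ℓ : ℕ) :
    pat132Count w ℓ = (w.count (c + 1)).choose ℓ := by
  simp only [pat132Count, headI_eq_of_head?_eq_some hb, getLastD_eq_of_getLast?_eq_some hc]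
  exact card_pattern_eq_choose_count (fun x => b < c ∧ c < x) hb hc (by omega) (by omega)
    (fun x hx => by have := hw x hx; omega) ℓ

theorem count_reverse_map_of_forall_iff {f : ℕ → ℕ} {A : List ℕ} {u v : ℕ}
    (h : ∀ x ∈ A, f x = v ↔ x = u) : (A.reverse.map f).count v = A.count u := by
  rw [List.count_eq_countP, List.count_eq_countP, List.countP_map, List.countP_reverse]
  exact List.countP_congr fun x hx => by simp [h x hx]

theorem forall_mem_phi1 {A : List ℕ} (hA : ∀ x ∈ A, 1 ≤ x ∧ x ≤ 4) :
    ∀ x ∈ phi1 A, 1 ≤ x ∧ x ≤ 4 := by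
  simp only [phi1, List.mem_map, List.mem_reverse]
  rintro _ ⟨y, hy, rfl⟩
  have := hA y hy
  split_ifs <;> omega

theorem forall_mem_phi2 {A : List ℕ} (hA : ∀ x ∈ A, 1 ≤ x ∧ x ≤ 4) :
    ∀ x ∈ phi2 A, 1 ≤ x ∧ x ≤ 4 := by
  simp only [phi2, List.mem_map, List.mem_reverse]
  rintro _ ⟨y, hy, rfl⟩
  have := hA y hy
  split_ifs <;> omega

theorem count_phi1 {A : List ℕ} (hA : ∀ x ∈ A, 1 ≤ x ∧ x ≤ 4) {a : ℕ} (ha : 1 ≤ a ∧ a ≤ 4) :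
    (phi1 A).count a = A.count (if a = 4 then 1 else a + 1) :=
  count_reverse_map_of_forall_iff fun x hx => by have := hA x hx; split_ifs <;> omega

theorem count_phi2 {A : List ℕ} (hA : ∀ x ∈ A, 1 ≤ x ∧ x ≤ 4) {a : ℕ} (ha : 1 ≤ a ∧ a ≤ 4) :
    (phi2 A).count a = A.count (if a = 1 then 4 else a - 1) :=
  count_reverse_map_of_forall_iff fun x hx => by have := hA x hx; split_ifs <;> omega

theorem forall_mem_peano : ∀ n, ∀ x ∈ peano n, 1 ≤ x ∧ x ≤ 4
  | 0 => by simp [peano]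
  | 1 => by simp [peano]
  | n + 2 => by
    have ih := forall_mem_peano (n + 1)
    simp only [peano, List.mem_append, List.mem_singleton]
    rintro x ((((((hx | rfl) | hx) | rfl) | hx) | rfl) | hx)
    all_goals first
      | exact forall_mem_phi1 ih x hx
      | exact forall_mem_phi2 ih x hx
      | exact ih x hx
      | omega

theorem count_peano_add_two (n : ℕ) {a : ℕ} (ha : 1 ≤ a ∧ a ≤ 4) :
    (peano (n + 2)).count a = (peano (n + 1)).count (if a = 4 then 1 else a + 1) +
      2 * (peano (n + 1)).count a + (peano (n + 1)).count (if a = 1 then 4 else a - 1) +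
      if a ≤ 3 then 1 else 0 := by
  have hA := forall_mem_peano (n + 1)
  simp only [peano, List.count_append, count_phi1 hA ha, count_phi2 hA ha, List.count_singleton]
  rcases ha with ⟨h1, h4⟩
  interval_cases a <;> grind

theorem count_peano_succ (n : ℕ) :
    (peano (n + 1)).count 1 = 4 ^ n ∧ (peano (n + 1)).count 2 = 4 ^ n + 2 ^ n - 1 ∧
      (peano (n + 1)).count 3 = 4 ^ n ∧ (peano (n + 1)).count 4 = 4 ^ n - 2 ^ n := by
  induction n with
  | zero => simp [peano]
  | succ n ih =>
    obtain ⟨h1, h2, h3, h4⟩ := ih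
    have hpos : 1 ≤ 2 ^ n := Nat.one_le_two_pow
    have hle : 2 ^ n ≤ 4 ^ n := Nat.pow_le_pow_left (by norm_num) n
    refine ⟨?_, ?_, ?_, ?_⟩ <;> rw [count_peano_add_two n (by norm_num)] <;>
      grind [pow_succ]

theorem peano_succ_ne_nil (n : ℕ) : peano (n + 1) ≠ [] := by
  cases n <;> simp [peano]

theorem head?_peano_add_two (n : ℕ) :
    (peano (n + 2)).head? = (peano (n + 1)).getLast?.map fun x => if x = 1 then 4 else x - 1 := by
  have hne : phi1 (peano (n + 1)) ≠ [] := by simp [phi1, peano_succ_ne_nil]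
  simp only [peano, List.append_assoc]
  rw [List.head?_append_of_ne_nil _ hne, phi1, List.head?_map, List.head?_reverse]

theorem getLast?_peano_add_two (n : ℕ) :
    (peano (n + 2)).getLast? = (peano (n + 1)).head?.map fun x => if x = 4 then 1 else x + 1 := by
  have hne : phi2 (peano (n + 1)) ≠ [] := by simp [phi2, peano_succ_ne_nil]
  simp only [peano]
  rw [List.getLast?_append_of_ne_nil _ hne, phi2, List.getLast?_map, List.getLast?_reverse]

theorem head?_getLast?_peano_odd (k : ℕ) :
    (peano (2 * k + 1)).head? = some 1 ∧ (peano (2 * k + 1)).getLast? = some 3 := by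
  induction k with
  | zero => exact ⟨rfl, rfl⟩
  | succ k ih =>
    have hhead : (peano (2 * k + 1 + 1)).head? = some 2 := by
      rw [head?_peano_add_two, ih.2]; rfl
    have hlast : (peano (2 * k + 1 + 1)).getLast? = some 2 := by
      rw [getLast?_peano_add_two, ih.1]; rfl
    rw [show 2 * (k + 1) + 1 = 2 * k + 1 + 2 by ring]
    constructor
    · rw [head?_peano_add_two, hlast]; rfl
    · rw [getLast?_peano_add_two, hhead]; rfl

theorem peano_pat123_pat132_general (k ℓ : ℕ) :
    pat123Count (peano (2 * k + 1)) ℓ = Nat.choose (4 ^ (2 * k) + 2 ^ (2 * k) - 1) ℓ ∧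
      pat132Count (peano (2 * k + 1)) ℓ = Nat.choose (4 ^ (2 * k) - 2 ^ (2 * k)) ℓ := by
  obtain ⟨hhead, hlast⟩ := head?_getLast?_peano_odd k
  obtain ⟨-, hcount2, -, hcount4⟩ := count_peano_succ (2 * k)
  have hletters : ∀ x ∈ peano (2 * k + 1), x ≤ 3 + 1 := fun x hx => (forall_mem_peano _ x hx).2
  rw [pat123Count_eq_choose_count (b := 1) hhead hlast,
    pat132Count_eq_choose_count hletters hhead hlast (by norm_num), hcount2, hcount4]
  exact ⟨rfl, rfl⟩

theorem peano_pat123_pat132 (k ℓ : ℕ) (hℓ : 1 ≤ ℓ) :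
    pat123Count (peano (2 * k + 1)) ℓ = Nat.choose (4 ^ (2 * k) + 2 ^ (2 * k) - 1) ℓ ∧
      pat132Count (peano (2 * k + 1)) ℓ = Nat.choose (4 ^ (2 * k) - 2 ^ (2 * k)) ℓ :=
  peano_pat123_pat132_general k ℓ
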